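/- arXiv:2110.08867 — 2 statements merged into one kernel-verified Lean document; each statement's English description precedes it below -/
import Mathlib

section
/- For every natural number n there exists a finite open cover 𝓤 of the Sorgenfrey plane S × S admitting no finite open refinement of order at most n: for every finite family 𝓥 of open subsets of S × S that covers S × S and is such that each member of 𝓥 is contained in some member of 𝓤, there exists a point of S × S belonging to at least n + 2 members of 𝓥. In particular, the Čech covering dimension of the Sorgenfrey plane is infinite. -/
/-- The Sorgenfrey topology on `ℝ`: generated by the half-open intervals `[a, b)`. -/
def sorgenfreyLine : TopologicalSpace ℝ :=
  TopologicalSpace.generateFrom {s : Set ℝ | ∃ a b : ℝ, s = Set.Ico a b}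

/-- The Sorgenfrey plane topology on `ℝ × ℝ`: the product of two copies of the
Sorgenfrey topology. -/
def sorgenfreyPlane : TopologicalSpace (ℝ × ℝ) :=
  TopologicalSpace.induced Prod.fst sorgenfreyLine ⊓
    TopologicalSpace.induced Prod.snd sorgenfreyLine

/-- A Bernstein set: both `B` and its complement meet every uncountable closed
(in the Euclidean topology) subset of `ℝ`. -/
def IsBernstein (B : Set ℝ) : Prop :=
  ∀ C : Set ℝ, IsClosed C → ¬C.Countable → (B ∩ C).Nonempty ∧ (Bᶜ ∩ C).Nonempty

/-!
The antidiagonal `{(x, -x)}` is closed and discrete in the Sorgenfrey plane, so every partition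
of `ℝ` into pieces `P₀, …, P_{n+1}` gives a finite open cover: `Uᵢ` is the plane minus the
antidiagonal points over the pieces `Pⱼ`, `j ≠ i`. Take the pieces to be fibres of a `ℚ`-linear
map `ℝ → ℚ`; such fibres are non-meagre in every open set.

Given a finite open refinement `𝓥`, each `(x, -x)` lies in a box `[x, x + δ) × [-x, -x + δ)`
inside a member of `𝓥`. By the Baire category theorem there is an interval in which, for every
`i`, the `x ∈ Pᵢ` with one fixed member `Vᵢ` and one fixed lower bound on `δ` are dense. Picking
such `xᵢ ∈ (g, g + ε)` with `ε` below all the bounds, the point `(g + ε, -g)` lies in all the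
boxes, hence in all `Vᵢ`; these are distinct, because `Vᵢ ⊆ Uⱼ` forces `j = i`.
-/

open Set Function TopologicalSpace Topology Pointwise

section Meagre

variable {X : Type*} [TopologicalSpace X]

def IsEverywhereNonmeagre (s : Set X) : Prop :=
  ∀ U : Set X, IsOpen U → U.Nonempty → ¬IsMeagre (s ∩ U)

theorem nonempty_interior_closure_of_not_isMeagre {s : Set X} (hs : ¬IsMeagre s) :
    (interior (closure s)).Nonempty :=
  nonempty_iff_ne_empty.2 fun h ↦ hs (IsNowhereDense.isMeagre h)

theorem exists_isOpen_subset_closure_of_subset_iUnion [Nonempty X] {ι κ : Type*} [Finite ι]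
    [Countable κ] {P : ι → Set X} (hP : ∀ i, IsEverywhereNonmeagre (P i))
    {A : ι → κ → Set X} (hA : ∀ i, P i ⊆ ⋃ k, A i k) :
    ∃ G : Set X, IsOpen G ∧ G.Nonempty ∧ ∀ i, ∃ k, G ⊆ closure (A i k) := by
  classical
  cases nonempty_fintype ι
  suffices ∀ s : Finset ι, ∃ G : Set X, IsOpen G ∧ G.Nonempty ∧ ∀ i ∈ s, ∃ k, G ⊆ closure (A i k)
    by simpa using this Finset.univ
  intro s
  induction s using Finset.induction_on with
  | empty => exact ⟨univ, isOpen_univ, univ_nonempty, by simp⟩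
  | insert a s _ ih =>
    obtain ⟨G, hGo, hGne, hG⟩ := ih
    have hPG : ¬IsMeagre (⋃ k, A a k ∩ G) := fun h ↦
      hP a G hGo hGne (h.mono (iUnion_inter G (A a) ▸ inter_subset_inter_left G (hA a)))
    obtain ⟨k, hk⟩ : ∃ k, ¬IsMeagre (A a k ∩ G) := by
      by_contra! h
      exact hPG (isMeagre_iUnion h)
    have hG' : interior (closure (A a k ∩ G)) ⊆ closure G :=
      interior_subset.trans (closure_mono inter_subset_right)
    refine ⟨_, isOpen_interior, nonempty_interior_closure_of_not_isMeagre hk, ?_⟩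
    intro i hi
    rcases Finset.mem_insert.1 hi with rfl | hi
    · exact ⟨k, interior_subset.trans (closure_mono inter_subset_left)⟩
    · obtain ⟨k', hk'⟩ := hG i hi
      exact ⟨k', hG'.trans (closure_minimal hk' isClosed_closure)⟩

end Meagre

theorem AddMonoidHom.preimage_singleton_eq_vadd_ker {G Q : Type*} [AddCommGroup G] [AddCommGroup Q]
    (f : G →+ Q) (x : G) : f ⁻¹' {f x} = x +ᵥ (f.ker : Set G) := by
  ext y
  simp only [mem_preimage, mem_singleton_iff, mem_vadd_set, SetLike.mem_coe,
    AddMonoidHom.mem_ker, vadd_eq_add]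
  constructor
  · exact fun h ↦ ⟨y - x, by simp [h], add_sub_cancel x y⟩
  · rintro ⟨k, hk, rfl⟩
    simp [hk]

section Group

variable {G : Type*} [AddCommGroup G] [TopologicalSpace G] [IsTopologicalAddGroup G]

theorem Dense.exists_countable_iUnion_vadd_eq_univ [LindelofSpace G] {D U : Set G}
    (hD : Dense D) (hU : IsOpen U) (hne : U.Nonempty) :
    ∃ T ⊆ D, T.Countable ∧ univ ⊆ ⋃ t ∈ T, t +ᵥ U := by
  refine isLindelof_univ.elim_countable_subcover_image (fun t _ ↦ hU.vadd t) fun x _ ↦ ?_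
  obtain ⟨u, hu⟩ := hne
  have hxU : IsOpen ((x - ·) ⁻¹' U) := hU.preimage (continuous_const.sub continuous_id)
  obtain ⟨t, htU, htD⟩ := hD.inter_open_nonempty _ hxU ⟨x - u, by simpa using hu⟩
  exact mem_biUnion htD ⟨x - t, htU, by simp⟩

theorem AddMonoidHom.isEverywhereNonmeagre_preimage_singleton [BaireSpace G] [LindelofSpace G]
    {Q : Type*} [AddCommGroup Q] [Countable Q] (f : G →+ Q) (hf : Dense (f.ker : Set G))
    (x : G) : IsEverywhereNonmeagre (f ⁻¹' {f x}) := by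
  intro U hU hne hmeagre
  have hfiber : ∀ y, IsMeagre (f ⁻¹' {f y}) := by
    intro y
    have hD : Dense (f ⁻¹' {f (y - x)}) := by
      rw [f.preimage_singleton_eq_vadd_ker]
      exact hf.vadd _
    -- countably many translates `t +ᵥ U` with `f t = f y - f x` cover `G`, and each of them
    -- meets `f ⁻¹' {f y}` in the translate of the meagre set `f ⁻¹' {f x} ∩ U`
    obtain ⟨T, hTD, hTc, hTU⟩ := hD.exists_countable_iUnion_vadd_eq_univ hU hne
    refine (isMeagre_biUnion hTc fun t _ ↦
      (Homeomorph.addLeft t).isInducing.isMeagre_image hmeagre).mono fun z hz ↦ ?_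
    obtain ⟨t, ht, u, hu, rfl⟩ := mem_iUnion₂.1 (hTU (mem_univ z))
    refine mem_biUnion ht ⟨u, ⟨?_, hu⟩, rfl⟩
    have ht : f t = f y - f x := by simpa using hTD ht
    simp only [mem_preimage, mem_singleton_iff, vadd_eq_add, map_add, ht] at hz ⊢
    exact (add_right_inj (f y - f x)).1 (hz.trans (sub_add_cancel (f y) (f x)).symm)
  have hall : ∀ q, IsMeagre (f ⁻¹' {q}) := by
    intro q
    by_cases hq : q ∈ range f
    · obtain ⟨y, rfl⟩ := hq
      exact hfiber y
    · simpa [preimage_singleton_eq_empty.2 hq] using IsMeagre.empty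
  refine not_isMeagre_of_isOpen isOpen_univ univ_nonempty ((isMeagre_iUnion hall).mono ?_)
  intro y _
  exact mem_iUnion.2 ⟨f y, rfl⟩

end Group

theorem exists_surjective_addMonoidHom_rat_dense_ker :
    ∃ f : ℝ →+ ℚ, Surjective f ∧ Dense (f.ker : Set ℝ) := by
  let b := Module.Basis.ofVectorSpace ℚ ℝ
  obtain ⟨i⟩ := b.index_nonempty
  let f : ℝ →ₗ[ℚ] ℚ := b.coord i
  have hf : Surjective f := fun q ↦ ⟨q • b i, by simp [f]⟩
  obtain ⟨x₀, hx₀, hx₀_ne⟩ : ∃ x₀ ∈ LinearMap.ker f, x₀ ≠ 0 := by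
    refine (Submodule.ne_bot_iff _).1 fun h ↦ not_countable (α := ℝ) ?_
    exact (LinearMap.ker_eq_bot.1 h).countable
  let h := Homeomorph.mulRight₀ x₀ hx₀_ne
  have hdense : DenseRange fun r : ℚ ↦ (r : ℝ) * x₀ :=
    h.surjective.denseRange.comp Rat.denseRange_cast h.continuous
  refine ⟨f.toAddMonoidHom, hf, Dense.mono ?_ hdense⟩
  rintro _ ⟨r, rfl⟩
  have : f ((r : ℝ) * x₀) = 0 := by
    rw [← Rat.smul_def, map_smul, LinearMap.mem_ker.1 hx₀, smul_zero]
  simpa using this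

theorem exists_pairwise_disjoint_isEverywhereNonmeagre (ι : Type*) [Countable ι] :
    ∃ P : ι → Set ℝ, Pairwise (Disjoint on P) ∧ ∀ i, IsEverywhereNonmeagre (P i) := by
  obtain ⟨f, hf, hker⟩ := exists_surjective_addMonoidHom_rat_dense_ker
  obtain ⟨e, he⟩ := Countable.exists_injective_nat ι
  refine ⟨fun i ↦ f ⁻¹' {(e i : ℚ)}, fun i j hij ↦ ?_, fun i ↦ ?_⟩
  · exact Disjoint.preimage f (disjoint_singleton.2 (by exact_mod_cast he.ne hij))
  · obtain ⟨x, hx⟩ := hf (e i)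
    simpa only [hx] using f.isEverywhereNonmeagre_preimage_singleton hker x

def sorgenfreyBox (p : ℝ × ℝ) (δ : ℝ) : Set (ℝ × ℝ) :=
  Ico p.1 (p.1 + δ) ×ˢ Ico p.2 (p.2 + δ)

theorem mem_sorgenfreyBox_self (p : ℝ × ℝ) {δ : ℝ} (hδ : 0 < δ) : p ∈ sorgenfreyBox p δ :=
  ⟨⟨le_rfl, lt_add_of_pos_right _ hδ⟩, ⟨le_rfl, lt_add_of_pos_right _ hδ⟩⟩

theorem sorgenfreyBox_mono (p : ℝ × ℝ) {δ ε : ℝ} (h : δ ≤ ε) :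
    sorgenfreyBox p δ ⊆ sorgenfreyBox p ε :=
  prod_mono (Ico_subset_Ico_right (by linarith)) (Ico_subset_Ico_right (by linarith))

theorem sorgenfreyPlane_eq_generateFrom : sorgenfreyPlane = generateFrom
    ((Prod.fst ⁻¹' ·) '' {s : Set ℝ | ∃ a b : ℝ, s = Ico a b} ∪
     (Prod.snd ⁻¹' ·) '' {s : Set ℝ | ∃ a b : ℝ, s = Ico a b}) := by
  rw [generateFrom_union, sorgenfreyPlane, sorgenfreyLine, induced_generateFrom_eq,
    induced_generateFrom_eq]

theorem isOpen_sorgenfreyBox (p : ℝ × ℝ) (δ : ℝ) : sorgenfreyPlane.IsOpen (sorgenfreyBox p δ) := by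
  rw [sorgenfreyPlane_eq_generateFrom]
  exact .inter _ _ (.basic _ (.inl ⟨_, ⟨_, _, rfl⟩, rfl⟩)) (.basic _ (.inr ⟨_, ⟨_, _, rfl⟩, rfl⟩))

theorem exists_sorgenfreyBox_subset {W : Set (ℝ × ℝ)} (hW : sorgenfreyPlane.IsOpen W)
    {p : ℝ × ℝ} (hp : p ∈ W) : ∃ δ > 0, sorgenfreyBox p δ ⊆ W := by
  rw [sorgenfreyPlane_eq_generateFrom] at hW
  induction hW with
  | basic s hs =>
    rcases hs with ⟨t, ⟨a, b, rfl⟩, rfl⟩ | ⟨t, ⟨a, b, rfl⟩, rfl⟩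
    · exact ⟨b - p.1, sub_pos.2 hp.2, fun q hq ↦ ⟨hp.1.trans hq.1.1, by linarith [hq.1.2]⟩⟩
    · exact ⟨b - p.2, sub_pos.2 hp.2, fun q hq ↦ ⟨hp.1.trans hq.2.1, by linarith [hq.2.2]⟩⟩
  | univ => exact ⟨1, one_pos, subset_univ _⟩
  | inter s t _ _ ihs iht =>
    obtain ⟨δ₁, hδ₁, h₁⟩ := ihs hp.1
    obtain ⟨δ₂, hδ₂, h₂⟩ := iht hp.2
    exact ⟨min δ₁ δ₂, lt_min hδ₁ hδ₂, subset_inter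
      ((sorgenfreyBox_mono p (min_le_left _ _)).trans h₁)
      ((sorgenfreyBox_mono p (min_le_right _ _)).trans h₂)⟩
  | sUnion S _ ih =>
    obtain ⟨s, hsS, hps⟩ := hp
    obtain ⟨δ, hδ, h⟩ := ih s hsS hps
    exact ⟨δ, hδ, h.trans (subset_sUnion_of_mem hsS)⟩

theorem sorgenfreyPlane_isOpen_iff {W : Set (ℝ × ℝ)} :
    sorgenfreyPlane.IsOpen W ↔ ∀ p ∈ W, ∃ δ > 0, sorgenfreyBox p δ ⊆ W := by
  refine ⟨fun hW p hp ↦ exists_sorgenfreyBox_subset hW hp, fun h ↦ ?_⟩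
  refine (@isOpen_iff_forall_mem_open _ sorgenfreyPlane W).2 fun p hp ↦ ?_
  obtain ⟨δ, hδ, hsub⟩ := h p hp
  exact ⟨_, hsub, isOpen_sorgenfreyBox p δ, mem_sorgenfreyBox_self p hδ⟩

-- boxes at points on or above the antidiagonal meet it at most in their corner
theorem sorgenfreyPlane_isOpen_compl_of_subset_antidiagonal {S : Set (ℝ × ℝ)}
    (hS : ∀ p ∈ S, p.1 + p.2 = 0) : sorgenfreyPlane.IsOpen Sᶜ := by
  refine sorgenfreyPlane_isOpen_iff.2 fun p hp ↦ ?_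
  rcases lt_or_ge (p.1 + p.2) 0 with hneg | hnonneg
  · refine ⟨-(p.1 + p.2) / 2, by linarith, fun q hq hqS ↦ ?_⟩
    linarith [hS q hqS, hq.1.2, hq.2.2]
  · refine ⟨1, one_pos, fun q hq hqS ↦ hp ?_⟩
    have hq0 := hS q hqS
    obtain rfl : q = p := Prod.ext (by linarith [hq.1.1, hq.2.1]) (by linarith [hq.1.1, hq.2.1])
    exact hqS

def antidiagonalCover {ι : Type*} (P : ι → Set ℝ) (i : ι) : Set (ℝ × ℝ) :=
  {p | p.1 + p.2 = 0 ∧ ∃ j ≠ i, p.1 ∈ P j}ᶜ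

section AntidiagonalCover

variable {ι : Type*} {P : ι → Set ℝ}

theorem isOpen_antidiagonalCover (i : ι) : sorgenfreyPlane.IsOpen (antidiagonalCover P i) :=
  sorgenfreyPlane_isOpen_compl_of_subset_antidiagonal fun _ hp ↦ hp.1

theorem iUnion_antidiagonalCover [Nonempty ι] (hP : Pairwise (Disjoint on P)) :
    ⋃ i, antidiagonalCover P i = univ := by
  refine eq_univ_of_forall fun p ↦ ?_
  by_cases h : ∃ i, p.1 ∈ P i
  · obtain ⟨i, hi⟩ := h
    exact mem_iUnion.2 ⟨i, fun ⟨_, j, hji, hj⟩ ↦ disjoint_left.1 (hP hji) hj hi⟩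
  · obtain ⟨i⟩ := ‹Nonempty ι›
    exact mem_iUnion.2 ⟨i, fun ⟨_, j, _, hj⟩ ↦ h ⟨j, hj⟩⟩

theorem eq_of_mk_neg_mem_antidiagonalCover {i j : ι} {x : ℝ} (hx : x ∈ P i)
    (h : (x, -x) ∈ antidiagonalCover P j) : i = j := by
  by_contra hij
  exact h ⟨add_neg_cancel x, i, hij, hx⟩

end AntidiagonalCover

theorem mk_neg_mem_sorgenfreyBox_mk_neg {g ε δ x : ℝ} (hx : x ∈ Ioo g (g + ε)) (hεδ : ε ≤ δ) :
    (g + ε, -g) ∈ sorgenfreyBox (x, -x) δ := by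
  obtain ⟨hgx, hxg⟩ := hx
  exact ⟨⟨by linarith, by linarith⟩, by linarith, by linarith⟩

theorem exists_mem_sorgenfreyBox_of_subset_closure {ι : Type*} [Finite ι] {G : Set ℝ}
    (hG : IsOpen G) (hne : G.Nonempty) {A : ι → Set ℝ} (hA : ∀ i, G ⊆ closure (A i))
    {δ : ι → ℝ} (hδ : ∀ i, 0 < δ i) :
    ∃ p : ℝ × ℝ, ∀ i, ∃ x ∈ A i, p ∈ sorgenfreyBox (x, -x) (δ i) := by
  obtain ⟨g, hg⟩ := hne
  obtain ⟨r, hr, hball⟩ := Metric.isOpen_iff.1 hG g hg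
  have hsmall : ∀ᶠ ε in 𝓝[>] (0 : ℝ), ε < r ∧ ∀ i, ε < δ i := nhdsWithin_le_nhds <|
    (eventually_lt_nhds hr).and (Filter.eventually_all.2 fun i ↦ eventually_lt_nhds (hδ i))
  obtain ⟨ε, ⟨hεr, hεδ⟩, hε⟩ := (hsmall.and self_mem_nhdsWithin).exists
  have hsub : Ioo g (g + ε) ⊆ G :=
    (Ioo_subset_Ioo (by linarith) (by linarith)).trans (Real.ball_eq_Ioo g r ▸ hball)
  refine ⟨(g + ε, -g), fun i ↦ ?_⟩
  have hmid : g + ε / 2 ∈ Ioo g (g + ε) := ⟨by linarith, by linarith⟩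
  obtain ⟨x, hxA, hx⟩ := (closure_inter_open_nonempty_iff isOpen_Ioo).1
    ⟨_, hA i (hsub hmid), hmid⟩
  exact ⟨x, hxA, mk_neg_mem_sorgenfreyBox_mk_neg hx (hεδ i).le⟩

theorem exists_injective_mem_of_refines_antidiagonalCover {ι : Type*} [Finite ι]
    {P : ι → Set ℝ} (hP : ∀ i, IsEverywhereNonmeagre (P i)) {𝓥 : Finset (Set (ℝ × ℝ))}
    (hopen : ∀ v ∈ 𝓥, sorgenfreyPlane.IsOpen v) (hcov : ⋃₀ (𝓥 : Set (Set (ℝ × ℝ))) = univ)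
    (href : ∀ v ∈ 𝓥, ∃ i, v ⊆ antidiagonalCover P i) :
    ∃ p : ℝ × ℝ, ∃ V : ι → Set (ℝ × ℝ), Injective V ∧ ∀ i, V i ∈ 𝓥 ∧ p ∈ V i := by
  let A : ι → 𝓥 × ℕ → Set ℝ := fun i k ↦
    P i ∩ {x | sorgenfreyBox (x, -x) (1 / (k.2 + 1)) ⊆ k.1}
  have hA : ∀ i, P i ⊆ ⋃ k, A i k := by
    intro i x hx
    obtain ⟨v, hv, hxv⟩ := hcov.symm ▸ mem_univ (x, -x)
    obtain ⟨δ, hδ, hbox⟩ := exists_sorgenfreyBox_subset (hopen v hv) hxv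
    obtain ⟨k, hk⟩ := exists_nat_one_div_lt hδ
    exact mem_iUnion.2 ⟨(⟨v, hv⟩, k), hx, (sorgenfreyBox_mono _ hk.le).trans hbox⟩
  obtain ⟨G, hGo, hGne, hGA⟩ := exists_isOpen_subset_closure_of_subset_iUnion hP hA
  choose σ hσ using hGA
  obtain ⟨p, hp⟩ := exists_mem_sorgenfreyBox_of_subset_closure hGo hGne hσ
    fun _ ↦ Nat.one_div_pos_of_nat
  choose x hxA hpx using hp
  have hdiag : ∀ i, (x i, -x i) ∈ ((σ i).1 : Set (ℝ × ℝ)) := fun i ↦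
    (hxA i).2 (mem_sorgenfreyBox_self _ Nat.one_div_pos_of_nat)
  refine ⟨p, fun i ↦ (σ i).1, fun i j hij ↦ ?_, fun i ↦ ⟨(σ i).1.2, (hxA i).2 (hpx i)⟩⟩
  obtain ⟨c, hc⟩ := href _ (σ j).1.2
  replace hij : ((σ i).1 : Set (ℝ × ℝ)) = (σ j).1 := hij
  exact (eq_of_mk_neg_mem_antidiagonalCover (hxA i).1 (hc (hij ▸ hdiag i))).trans
    (eq_of_mk_neg_mem_antidiagonalCover (hxA j).1 (hc (hdiag j))).symm

/-- For every `n` there is a finite open cover `𝓤` of the Sorgenfrey plane with no finite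
open refinement of order at most `n`: every finite open cover `𝓥` refining `𝓤` has a
point lying in at least `n + 2` of its members. Hence the Čech covering dimension of the
Sorgenfrey plane is infinite. -/
theorem sorgenfrey_plane_cover_without_small_refinement (n : ℕ) :
    ∃ 𝓤 : Finset (Set (ℝ × ℝ)),
      (∀ u ∈ 𝓤, sorgenfreyPlane.IsOpen u) ∧
      ⋃₀ (𝓤 : Set (Set (ℝ × ℝ))) = Set.univ ∧
      ∀ 𝓥 : Finset (Set (ℝ × ℝ)),
        (∀ v ∈ 𝓥, sorgenfreyPlane.IsOpen v) →
        ⋃₀ (𝓥 : Set (Set (ℝ × ℝ))) = Set.univ →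
        (∀ v ∈ 𝓥, ∃ u ∈ 𝓤, v ⊆ u) →
        ∃ p : ℝ × ℝ, ∃ 𝓦 : Finset (Set (ℝ × ℝ)),
          𝓦 ⊆ 𝓥 ∧ n + 2 ≤ 𝓦.card ∧ ∀ v ∈ 𝓦, p ∈ v := by
  classical
  obtain ⟨P, hdisj, hP⟩ := exists_pairwise_disjoint_isEverywhereNonmeagre (Fin (n + 2))
  refine ⟨Finset.univ.image (antidiagonalCover P), ?_, ?_, fun 𝓥 hopen hcov href ↦ ?_⟩
  · simpa using isOpen_antidiagonalCover
  · simpa [sUnion_image] using iUnion_antidiagonalCover hdisj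
  · obtain ⟨p, V, hVinj, hV⟩ := exists_injective_mem_of_refines_antidiagonalCover hP hopen hcov
      (by simpa using href)
    refine ⟨p, Finset.univ.image V, ?_, ?_, ?_⟩
    · simpa [Finset.image_subset_iff] using fun i ↦ (hV i).1
    · simp [Finset.card_image_of_injective _ hVinj]
    · simpa using fun i ↦ (hV i).2
end

section
/- Let m ≥ 1 and let B₁, …, B_m be Bernstein subsets of ℝ. If V₁, …, V_m are open subsets of the Sorgenfrey plane S × S such that (x, −x) ∈ V_i for every x ∈ B_i and every i, then the intersection V₁ ∩ ⋯ ∩ V_m is nonempty. -/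
/-!
For each `i` and `n`, let `Sᵢₙ` be the set of `x` such that the half-open square of side
`1 / (n + 1)` with corner `(x, -x)` lies in `Vᵢ`. Openness in the Sorgenfrey plane gives
`Bᵢ ⊆ ⋃ₙ Sᵢₙ`, so the complement of the Borel set `⋃ₙ closure Sᵢₙ` misses `Bᵢ`; since an
uncountable Borel set contains an uncountable compact set, that complement is countable.
Hence some `a` lies in every `⋃ₙ closure Sᵢₙ`, and, the `Sᵢₙ` increasing in `n`, in every
`closure Sᵢₙ` for one common `n`. Moving from `(a, -a)` by `1 / (2n + 2)` in both coordinates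
then lands in every `Vᵢ`.
-/

open Set Filter Topology

instance : Uncountable (ℕ → Bool) := by
  rw [← not_countable_iff, ← Cardinal.mk_le_aleph0_iff, not_le]
  simpa using Cardinal.cantor Cardinal.aleph0

/-- A Borel set is clopen for a finer Polish topology, in which it contains a Cantor set. -/
theorem MeasurableSet.exists_isCompact_subset_not_countable {α : Type*} [TopologicalSpace α]
    [PolishSpace α] [MeasurableSpace α] [BorelSpace α] {s : Set α} (hs : MeasurableSet s)
    (hunc : ¬s.Countable) : ∃ K ⊆ s, IsCompact K ∧ ¬K.Countable := by
  obtain ⟨f, hfs, hf_cont, hf_inj⟩ :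
      ∃ f : (ℕ → Bool) → α, range f ⊆ s ∧ Continuous f ∧ Function.Injective f := by
    obtain ⟨t', ht', ht'_polish, hs_closed, -⟩ := hs.isClopenable
    obtain ⟨f, hfs, hf_cont, hf_inj⟩ :=
      @IsClosed.exists_nat_bool_injection_of_not_countable α t' ht'_polish s hs_closed hunc
    exact ⟨f, hfs, continuous_le_rng ht' hf_cont, hf_inj⟩
  refine ⟨range f, hfs, isCompact_range hf_cont, fun hcount => ?_⟩
  exact not_countable_univ ((mapsTo_range f univ).countable_of_injOn hf_inj.injOn hcount)

theorem IsBernstein.countable_compl_of_subset {B s : Set ℝ} (hB : IsBernstein B)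
    (hs : MeasurableSet s) (hBs : B ⊆ s) : sᶜ.Countable := by
  by_contra hunc
  obtain ⟨K, hKs, hK, hKunc⟩ := hs.compl.exists_isCompact_subset_not_countable hunc
  obtain ⟨x, hxB, hxK⟩ := (hB K hK.isClosed hKunc).1
  exact hKs hxK (hBs hxB)

theorem nhds_sorgenfreyLine (x : ℝ) : @nhds ℝ sorgenfreyLine x = 𝓝[≥] x := by
  refine le_antisymm ?_ ?_
  · refine (nhdsGE_basis_Ico x).ge_iff.2 fun b hxb => ?_
    exact @IsOpen.mem_nhds ℝ sorgenfreyLine _ _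
      (TopologicalSpace.isOpen_generateFrom_of_mem ⟨x, b, rfl⟩) ⟨le_rfl, hxb⟩
  · rw [sorgenfreyLine, TopologicalSpace.nhds_generateFrom]
    refine le_iInf₂ ?_
    rintro _ ⟨hx, a, b, rfl⟩
    exact le_principal_iff.2 (Ico_mem_nhdsGE_of_mem hx)

theorem nhds_sorgenfreyPlane (p : ℝ × ℝ) :
    @nhds _ sorgenfreyPlane p = 𝓝[≥] p.1 ×ˢ 𝓝[≥] p.2 := by
  rw [← nhds_sorgenfreyLine, ← nhds_sorgenfreyLine]
  exact @nhds_prod_eq ℝ ℝ sorgenfreyLine sorgenfreyLine p.1 p.2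

theorem exists_Ico_prod_subset_of_isOpen_sorgenfreyPlane {V : Set (ℝ × ℝ)}
    (hV : sorgenfreyPlane.IsOpen V) {p : ℝ × ℝ} (hp : p ∈ V) :
    ∃ ε > 0, Ico p.1 (p.1 + ε) ×ˢ Ico p.2 (p.2 + ε) ⊆ V := by
  have hV_nhds : V ∈ 𝓝[≥] p.1 ×ˢ 𝓝[≥] p.2 :=
    nhds_sorgenfreyPlane p ▸ @IsOpen.mem_nhds _ sorgenfreyPlane _ _ hV hp
  obtain ⟨⟨u, v⟩, ⟨hu, hv⟩, huv⟩ :=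
    ((nhdsGE_basis_Ico p.1).prod (nhdsGE_basis_Ico p.2)).mem_iff.1 hV_nhds
  refine ⟨min (u - p.1) (v - p.2), by simp [hu, hv], (Set.prod_mono ?_ ?_).trans huv⟩
  · exact Ico_subset_Ico_right (by linarith [min_le_left (u - p.1) (v - p.2)])
  · exact Ico_subset_Ico_right (by linarith [min_le_right (u - p.1) (v - p.2)])

def antidiagSquareSet (V : Set (ℝ × ℝ)) (δ : ℝ) : Set ℝ :=
  {x | Ico x (x + δ) ×ˢ Ico (-x) (-x + δ) ⊆ V}

theorem antidiagSquareSet_antitone (V : Set (ℝ × ℝ)) : Antitone (antidiagSquareSet V) :=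
  fun _ _ hδ _ hx => (Set.prod_mono (Ico_subset_Ico_right (by linarith))
    (Ico_subset_Ico_right (by linarith))).trans hx

theorem exists_nat_mem_antidiagSquareSet {V : Set (ℝ × ℝ)} (hV : sorgenfreyPlane.IsOpen V)
    {x : ℝ} (hx : (x, -x) ∈ V) : ∃ n : ℕ, x ∈ antidiagSquareSet V (1 / (n + 1)) := by
  obtain ⟨ε, hε, hsub⟩ := exists_Ico_prod_subset_of_isOpen_sorgenfreyPlane hV hx
  obtain ⟨n, hn⟩ := exists_nat_one_div_lt hε
  exact ⟨n, antidiagSquareSet_antitone V hn.le hsub⟩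

theorem mem_of_mem_closure_antidiagSquareSet {V : Set (ℝ × ℝ)} {δ a : ℝ} (hδ : 0 < δ)
    (ha : a ∈ closure (antidiagSquareSet V δ)) : (a + δ / 2, -a + δ / 2) ∈ V := by
  obtain ⟨x, hxV, hax⟩ := Metric.mem_closure_iff.1 ha (δ / 2) (half_pos hδ)
  rw [Real.dist_eq, abs_lt] at hax
  exact hxV ⟨⟨by linarith, by linarith⟩, ⟨by linarith, by linarith⟩⟩

theorem sorgenfrey_open_over_bernstein_antidiagonal_inter_nonempty_general
    (m : ℕ) (B : Fin m → Set ℝ) (hBern : ∀ i, IsBernstein (B i))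
    (V : Fin m → Set (ℝ × ℝ)) (hVopen : ∀ i, sorgenfreyPlane.IsOpen (V i))
    (hBV : ∀ i, ∀ x ∈ B i, ((x, -x) : ℝ × ℝ) ∈ V i) :
    (⋂ i, V i).Nonempty := by
  set F : Fin m → ℕ → Set ℝ := fun i n => closure (antidiagSquareSet (V i) (1 / (n + 1)))
  have hF_mono : ∀ i, Monotone (F i) := fun i n k hnk =>
    closure_mono (antidiagSquareSet_antitone (V i) (Nat.one_div_le_one_div hnk))
  have hF_cocountable : ∀ i, (⋃ n, F i n)ᶜ.Countable := fun i =>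
    (hBern i).countable_compl_of_subset (.iUnion fun n => isClosed_closure.measurableSet)
      fun x hx => mem_iUnion.2 <| (exists_nat_mem_antidiagSquareSet (hVopen i) (hBV i x hx)).imp
        fun n hn => subset_closure hn
  obtain ⟨a, ha⟩ : (⋂ i, ⋃ n, F i n).Nonempty := by
    refine nonempty_iff_ne_empty.2 fun hempty => not_countable_univ (α := ℝ) ?_
    have hcount := countable_iUnion hF_cocountable
    rwa [← compl_iInter, hempty, compl_empty] at hcount
  rw [← iUnion_iInter_of_monotone hF_mono, mem_iUnion] at ha
  obtain ⟨n, ha⟩ := ha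
  exact ⟨_, mem_iInter.2 fun i =>
    mem_of_mem_closure_antidiagSquareSet Nat.one_div_pos_of_nat (mem_iInter.1 ha i)⟩

/-- If `B₁, …, B_m` (`m ≥ 1`) are Bernstein sets and `V₁, …, V_m` are open subsets of the
Sorgenfrey plane with `(x, -x) ∈ Vᵢ` for all `x ∈ Bᵢ`, then `V₁ ∩ ⋯ ∩ V_m ≠ ∅`. -/
theorem sorgenfrey_open_over_bernstein_antidiagonal_inter_nonempty
    (m : ℕ) (hm : 1 ≤ m) (B : Fin m → Set ℝ) (hBern : ∀ i, IsBernstein (B i))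
    (V : Fin m → Set (ℝ × ℝ)) (hVopen : ∀ i, sorgenfreyPlane.IsOpen (V i))
    (hBV : ∀ i, ∀ x ∈ B i, ((x, -x) : ℝ × ℝ) ∈ V i) :
    (⋂ i, V i).Nonempty :=
  sorgenfrey_open_over_bernstein_antidiagonal_inter_nonempty_general m B hBern V hVopen hBV
end
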